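/- Let N ≥ 2. Let V = {(u,v) ∈ ℂ^N × ℂ^N : ‖u‖ = ‖v‖ = 1 and ⟨u,v⟩ = 0} be the space of orthonormal 2-frames, let D° = {h ∈ ℂ : |h| < 1} be the open unit disc, and let W = {(w,x) ∈ ℂ^N × ℂ^N : ‖w‖ = ‖x‖ = 1 and |⟨w,x⟩| < 1} be the space of normalised 2-frames, all with their subspace topologies. Then the map f : V × D° → W given by f((u,v), h) = ((R/2)·u + (conj(h)/R)·v, (h/R)·u + (R/2)·v), where R = (1+|h|)^{1/2} + (1−|h|)^{1/2} (i.e. the columns of the matrix (u v)·M_h), is a homeomorphism; its inverse sends (w,x) to ((w x)·M_k⁻¹, k) where k = ⟨w,x⟩. In particular ⟨f((u,v),h)₁, f((u,v),h)₂⟩ = h. -/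

import Mathlib

open Matrix

/-- `R = (1+|h|)^{1/2} + (1−|h|)^{1/2}`. -/
noncomputable def lowdinR (h : ℂ) : ℝ :=
  Real.sqrt (1 + ‖h‖) + Real.sqrt (1 - ‖h‖)

/-- `M_h = R⁻¹ · [[R²/2, h], [conj h, R²/2]]`. -/
noncomputable def lowdinM (h : ℂ) : Matrix (Fin 2) (Fin 2) ℂ :=
  ((lowdinR h : ℂ))⁻¹ •
    !![((lowdinR h ^ 2 / 2 : ℝ) : ℂ), h;
       (starRingEnd ℂ) h, ((lowdinR h ^ 2 / 2 : ℝ) : ℂ)]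

/-- The space `V` of orthonormal 2-frames in `ℂ^N`. -/
abbrev OrthFrames (N : ℕ) : Type :=
  {p : EuclideanSpace ℂ (Fin N) × EuclideanSpace ℂ (Fin N) //
    ‖p.1‖ = 1 ∧ ‖p.2‖ = 1 ∧ (inner ℂ p.1 p.2 : ℂ) = 0}

/-- The open unit disc `D° ⊂ ℂ`. -/
abbrev OpenDisc : Type := {h : ℂ // ‖h‖ < 1}

/-- The space `W` of normalised 2-frames in `ℂ^N`. -/
abbrev NormFrames (N : ℕ) : Type :=
  {p : EuclideanSpace ℂ (Fin N) × EuclideanSpace ℂ (Fin N) //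
    ‖p.1‖ = 1 ∧ ‖p.2‖ = 1 ∧ ‖(inner ℂ p.1 p.2 : ℂ)‖ < 1}

/-! ### Auxiliary scalar definitions and lemmas -/

noncomputable def lowdinS (h : ℂ) : ℝ := Real.sqrt (1 - ‖h‖ ^ 2)

noncomputable def lA (h : ℂ) : ℂ := ((lowdinR h / 2 : ℝ) : ℂ)
noncomputable def lB (h : ℂ) : ℂ := (starRingEnd ℂ) h / (lowdinR h : ℂ)
noncomputable def lC (h : ℂ) : ℂ := h / (lowdinR h : ℂ)
noncomputable def la (k : ℂ) : ℂ := (lowdinR k : ℂ) / (2 * (lowdinS k : ℂ))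
noncomputable def lb (k : ℂ) : ℂ :=
  -((starRingEnd ℂ) k) / ((lowdinR k : ℂ) * (lowdinS k : ℂ))
noncomputable def lc (k : ℂ) : ℂ := -k / ((lowdinR k : ℂ) * (lowdinS k : ℂ))

lemma lowdinR_ge_one (h : ℂ) : 1 ≤ lowdinR h := by
  have h0 := norm_nonneg h
  have h1 : Real.sqrt 1 ≤ Real.sqrt (1 + ‖h‖) := Real.sqrt_le_sqrt (by linarith)
  simp only [Real.sqrt_one] at h1
  have := Real.sqrt_nonneg (1 - ‖h‖)
  unfold lowdinR; linarith

lemma lowdinS_pos {h : ℂ} (hh : ‖h‖ < 1) : 0 < lowdinS h := by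
  have : 0 < 1 - ‖h‖ ^ 2 := by nlinarith [norm_nonneg h]
  exact Real.sqrt_pos.mpr this

lemma lowdinR_sq {h : ℂ} (hh : ‖h‖ ≤ 1) :
    lowdinR h ^ 2 = 2 + 2 * lowdinS h := by
  have h0 := norm_nonneg h
  unfold lowdinR lowdinS
  rw [add_sq, Real.sq_sqrt (by linarith), Real.sq_sqrt (by linarith), mul_assoc,
    ← Real.sqrt_mul (by linarith),
    show (1 + ‖h‖) * (1 - ‖h‖) = 1 - ‖h‖ ^ 2 by ring]
  ring

lemma lowdinS_sq {h : ℂ} (hh : ‖h‖ ≤ 1) :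
    lowdinS h ^ 2 = 1 - ‖h‖ ^ 2 := by
  have h0 := norm_nonneg h
  exact Real.sq_sqrt (by nlinarith)

lemma cR_ne (h : ℂ) : ((lowdinR h : ℝ) : ℂ) ≠ 0 := by
  have := lowdinR_ge_one h
  simp only [ne_eq, Complex.ofReal_eq_zero]; linarith

lemma cS_ne {h : ℂ} (hh : ‖h‖ < 1) : ((lowdinS h : ℝ) : ℂ) ≠ 0 := by
  have := lowdinS_pos hh
  simp only [ne_eq, Complex.ofReal_eq_zero]; linarith

lemma cR_sq {h : ℂ} (hh : ‖h‖ < 1) :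
    ((lowdinR h : ℝ) : ℂ) ^ 2 = 2 + 2 * ((lowdinS h : ℝ) : ℂ) := by
  have := lowdinR_sq hh.le
  exact_mod_cast congrArg (Complex.ofReal) this

lemma cS_sq {h : ℂ} (hh : ‖h‖ < 1) :
    ((lowdinS h : ℝ) : ℂ) ^ 2 = 1 - (starRingEnd ℂ) h * h := by
  have h1 := lowdinS_sq hh.le
  have h2 : (starRingEnd ℂ) h * h = ((‖h‖ ^ 2 : ℝ) : ℂ) := by
    rw [mul_comm, Complex.mul_conj]
    norm_cast
    exact Complex.normSq_eq_norm_sq h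
  rw [h2]
  exact_mod_cast congrArg (Complex.ofReal) h1

lemma conj_lA (h : ℂ) : (starRingEnd ℂ) (lA h) = lA h := by
  simp [lA, Complex.conj_ofReal, map_ofNat]
lemma conj_lB (h : ℂ) : (starRingEnd ℂ) (lB h) = lC h := by
  simp [lB, lC, map_div₀, Complex.conj_ofReal, map_ofNat]
lemma conj_lC (h : ℂ) : (starRingEnd ℂ) (lC h) = lB h := by
  simp [lB, lC, map_div₀, Complex.conj_ofReal, map_ofNat]
lemma conj_la (h : ℂ) : (starRingEnd ℂ) (la h) = la h := by
  simp [la, map_div₀, Complex.conj_ofReal, map_ofNat]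
lemma conj_lb (h : ℂ) : (starRingEnd ℂ) (lb h) = lc h := by
  simp [lb, lc, map_div₀, Complex.conj_ofReal, map_ofNat]
lemma conj_lc (h : ℂ) : (starRingEnd ℂ) (lc h) = lb h := by
  simp [lb, lc, map_div₀, Complex.conj_ofReal, map_ofNat]

section scalars
variable {h : ℂ} (hh : ‖h‖ < 1)
include hh

set_option linter.unusedSectionVars false

lemma sF1 : lA h * lA h + lC h * lB h = 1 := by
  unfold lA lB lC
  have hr := cR_sq hh; have hs := cS_sq hh
  push_cast
  field_simp [cR_ne h]
  linear_combination (((lowdinR h : ℂ))^2 + 2*((lowdinS h : ℂ)) - 2) * hr + 4 * hs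

lemma sF2 : lA h * lC h + lC h * lA h = h := by
  unfold lA lC; push_cast; field_simp [cR_ne h]; ring

lemma sF1' : lB h * lC h + lA h * lA h = 1 := by
  linear_combination sF1 hh

lemma sS1 : lA h * la h + lB h * lc h = 1 := by
  unfold lA lB la lc
  have hr := cR_sq hh; have hs := cS_sq hh
  push_cast
  field_simp [cR_ne h, cS_ne hh]
  linear_combination (((lowdinR h : ℂ))^2 + 2
    - 2*(lowdinS h : ℂ)) * hr + (-4) * hs

lemma sS2 : lA h * lb h + lB h * la h = 0 := by
  unfold lA lB la lb
  push_cast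
  field_simp [cR_ne h, cS_ne hh]
  ring

lemma sS3 : lC h * la h + lA h * lc h = 0 := by
  unfold lA lC la lc
  push_cast
  field_simp [cR_ne h, cS_ne hh]
  ring

lemma sS4 : lC h * lb h + lA h * la h = 1 := by
  unfold lA lC la lb
  have hr := cR_sq hh; have hs := cS_sq hh
  push_cast
  field_simp [cR_ne h, cS_ne hh]
  linear_combination (((lowdinR h : ℂ))^2 + 2
    - 2*(lowdinS h : ℂ)) * hr + (-4) * hs

lemma sI1 : la h * lA h + lb h * lC h = 1 := by
  unfold lA lC la lb
  have hr := cR_sq hh; have hs := cS_sq hh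
  push_cast
  field_simp [cR_ne h, cS_ne hh]
  linear_combination (((lowdinR h : ℂ))^2 + 2
    - 2*(lowdinS h : ℂ)) * hr + (-4) * hs

lemma sI2 : la h * lB h + lb h * lA h = 0 := by
  unfold lA lB la lb
  push_cast
  field_simp [cR_ne h, cS_ne hh]
  ring

lemma sI3 : lc h * lA h + la h * lC h = 0 := by
  unfold lA lC la lc
  push_cast
  field_simp [cR_ne h, cS_ne hh]
  ring

lemma sI4 : lc h * lB h + la h * lA h = 1 := by
  unfold lA lB la lc
  have hr := cR_sq hh; have hs := cS_sq hh
  push_cast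
  field_simp [cR_ne h, cS_ne hh]
  linear_combination (((lowdinR h : ℂ))^2 + 2
    - 2*(lowdinS h : ℂ)) * hr + (-4) * hs

lemma sG1 : la h * la h + la h * lb h * h + lc h * la h * (starRingEnd ℂ) h
    + lc h * lb h = 1 := by
  have hr := cR_sq hh; have hs := cS_sq hh
  have hr0 := cR_ne h; have hs0 := cS_ne hh
  rw [la, lb, lc, div_mul_div_comm, div_mul_div_comm, div_mul_eq_mul_div, div_mul_div_comm,
    div_mul_eq_mul_div, div_mul_div_comm,
    div_add_div _ _ (by simp [hr0, hs0]) (by simp [hr0, hs0]),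
    div_add_div _ _ (by simp [hr0, hs0]) (by simp [hr0, hs0]),
    div_add_div _ _ (by simp [hr0, hs0]) (by simp [hr0, hs0]),
    div_eq_one_iff_eq (by simp [hr0, hs0])]
  linear_combination (4*((lowdinS h : ℂ))^6*((lowdinR h : ℂ))^4 +
      (-16*((lowdinS h : ℂ))^6*((starRingEnd ℂ) h * h) + 8*((lowdinS h : ℂ))^6
        + 8*((lowdinS h : ℂ))^7 - 16*((lowdinS h : ℂ))^8)*((lowdinR h : ℂ))^2) * hr +
    (-16*((lowdinS h : ℂ))^6*((lowdinR h : ℂ))^2*(1+2*(lowdinS h : ℂ))) * hs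

lemma sG2 : la h * lc h + la h * la h * h + lc h * lc h * (starRingEnd ℂ) h
    + lc h * la h = 0 := by
  have hr := cR_sq hh; have hs := cS_sq hh
  have hr0 := cR_ne h; have hs0 := cS_ne hh
  rw [la, lc, div_mul_div_comm, div_mul_div_comm, div_mul_eq_mul_div, div_mul_div_comm,
    div_mul_eq_mul_div, div_mul_div_comm,
    div_add_div _ _ (by simp [hr0, hs0]) (by simp [hr0, hs0]),
    div_add_div _ _ (by simp [hr0, hs0]) (by simp [hr0, hs0]),
    div_add_div _ _ (by simp [hr0, hs0]) (by simp [hr0, hs0]),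
    div_eq_zero_iff]
  left
  linear_combination (4*h*((lowdinS h : ℂ))^6*((lowdinR h : ℂ))^2*(((lowdinR h : ℂ))^2
      + 2*(lowdinS h : ℂ) - 2)) * hr + (16*h*((lowdinS h : ℂ))^6*((lowdinR h : ℂ))^2) * hs

lemma sG3 : lb h * lc h + lb h * la h * h + la h * lc h * (starRingEnd ℂ) h
    + la h * la h = 1 := by
  have hr := cR_sq hh; have hs := cS_sq hh
  have hr0 := cR_ne h; have hs0 := cS_ne hh
  rw [la, lb, lc, div_mul_div_comm, div_mul_div_comm, div_mul_eq_mul_div, div_mul_div_comm,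
    div_mul_eq_mul_div, div_mul_div_comm,
    div_add_div _ _ (by simp [hr0, hs0]) (by simp [hr0, hs0]),
    div_add_div _ _ (by simp [hr0, hs0]) (by simp [hr0, hs0]),
    div_add_div _ _ (by simp [hr0, hs0]) (by simp [hr0, hs0]),
    div_eq_one_iff_eq (by simp [hr0, hs0])]
  linear_combination (4*((lowdinS h : ℂ))^6*((lowdinR h : ℂ))^4 +
      (-16*((lowdinS h : ℂ))^6*((starRingEnd ℂ) h * h) + 8*((lowdinS h : ℂ))^6
        + 8*((lowdinS h : ℂ))^7 - 16*((lowdinS h : ℂ))^8)*((lowdinR h : ℂ))^2) * hr +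
    (-16*((lowdinS h : ℂ))^6*((lowdinR h : ℂ))^2*(1+2*(lowdinS h : ℂ))) * hs

end scalars

/-! ### The inverse of `lowdinM` -/

lemma lowdinM_inv {k : ℂ} (hk : ‖k‖ < 1) :
    (lowdinM k)⁻¹ = !![la k, lc k; lb k, la k] := by
  have hr := cR_sq hk; have hs := cS_sq hk
  have hr0 := cR_ne k; have hs0 := cS_ne hk
  apply Matrix.inv_eq_right_inv
  rw [lowdinM, Matrix.smul_mul, Matrix.mul_fin_two, Matrix.one_fin_two]
  have e1 : ((lowdinR k ^ 2 / 2 : ℝ) : ℂ) * la k + k * lb k = (lowdinR k : ℂ) := by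
    unfold la lb; push_cast; field_simp
    linear_combination (((lowdinR k : ℂ))^2 + 2
      - 2*(lowdinS k : ℂ)) * hr + (-4) * hs
  have e2 : ((lowdinR k ^ 2 / 2 : ℝ) : ℂ) * lc k + k * la k = 0 := by
    unfold la lc; push_cast; field_simp; ring
  have e3 : (starRingEnd ℂ) k * la k + ((lowdinR k ^ 2 / 2 : ℝ) : ℂ) * lb k = 0 := by
    unfold la lb; push_cast; field_simp; ring
  have e4 : (starRingEnd ℂ) k * lc k + ((lowdinR k ^ 2 / 2 : ℝ) : ℂ) * la k
      = (lowdinR k : ℂ) := by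
    unfold la lc; push_cast; field_simp
    linear_combination (((lowdinR k : ℂ))^2 + 2
      - 2*(lowdinS k : ℂ)) * hr + (-4) * hs
  rw [e1, e2, e3, e4]
  ext i j
  fin_cases i <;> fin_cases j <;>
    simp [Matrix.smul_apply, inv_mul_cancel₀ hr0]

/-! ### Vector-level lemmas -/

section vec
variable {N : ℕ}

lemma inner_comb (u v : EuclideanSpace ℂ (Fin N)) (a b c d : ℂ) :
    (inner ℂ (a • u + b • v) (c • u + d • v) : ℂ) =
      (starRingEnd ℂ) a * c * (inner ℂ u u : ℂ) + (starRingEnd ℂ) a * d * (inner ℂ u v : ℂ)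
      + (starRingEnd ℂ) b * c * (inner ℂ v u : ℂ)
      + (starRingEnd ℂ) b * d * (inner ℂ v v : ℂ) := by
  simp only [inner_add_left, inner_add_right, inner_smul_left, inner_smul_right]
  ring

lemma inner_self_one {w : EuclideanSpace ℂ (Fin N)} (hw : ‖w‖ = 1) :
    (inner ℂ w w : ℂ) = 1 := by
  rw [inner_self_eq_norm_sq_to_K, hw]; norm_num

lemma norm_one_of_inner {w : EuclideanSpace ℂ (Fin N)} (hw : (inner ℂ w w : ℂ) = 1) :
    ‖w‖ = 1 := by
  have h2 := inner_self_eq_norm_sq_to_K (𝕜 := ℂ) w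
  rw [hw] at h2
  have h2' : ((1:ℝ):ℂ) = ((‖w‖ ^ 2 : ℝ) : ℂ) := by push_cast; exact h2
  have h3 : (1:ℝ) = ‖w‖ ^ 2 := Complex.ofReal_inj.mp h2'
  have h4 : (‖w‖ - 1) * (‖w‖ + 1) = 0 := by ring_nf; linarith
  rcases mul_eq_zero.mp h4 with h5 | h5
  · linarith
  · have := norm_nonneg w; linarith

variable {u v w x : EuclideanSpace ℂ (Fin N)}

lemma fwd_ww (hu : ‖u‖ = 1) (hv : ‖v‖ = 1) (huv : (inner ℂ u v : ℂ) = 0)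
    {h : ℂ} (hh : ‖h‖ < 1) :
    (inner ℂ (lA h • u + lB h • v) (lA h • u + lB h • v) : ℂ) = 1 := by
  have hvu : (inner ℂ v u : ℂ) = 0 := by rw [← inner_conj_symm, huv, map_zero]
  rw [inner_comb, inner_self_one hu, inner_self_one hv, huv, hvu,
    conj_lA, conj_lB]
  linear_combination sF1 hh

lemma fwd_xx (hu : ‖u‖ = 1) (hv : ‖v‖ = 1) (huv : (inner ℂ u v : ℂ) = 0)
    {h : ℂ} (hh : ‖h‖ < 1) :
    (inner ℂ (lC h • u + lA h • v) (lC h • u + lA h • v) : ℂ) = 1 := by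
  have hvu : (inner ℂ v u : ℂ) = 0 := by rw [← inner_conj_symm, huv, map_zero]
  rw [inner_comb, inner_self_one hu, inner_self_one hv, huv, hvu,
    conj_lA, conj_lC]
  linear_combination sF1' hh

lemma fwd_wx (hu : ‖u‖ = 1) (hv : ‖v‖ = 1) (huv : (inner ℂ u v : ℂ) = 0)
    {h : ℂ} (hh : ‖h‖ < 1) :
    (inner ℂ (lA h • u + lB h • v) (lC h • u + lA h • v) : ℂ) = h := by
  have hvu : (inner ℂ v u : ℂ) = 0 := by rw [← inner_conj_symm, huv, map_zero]
  rw [inner_comb, inner_self_one hu, inner_self_one hv, huv, hvu,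
    conj_lA, conj_lB]
  linear_combination sF2 hh

lemma inv_uu (hw : ‖w‖ = 1) (hx : ‖x‖ = 1) {k : ℂ} (hk : (inner ℂ w x : ℂ) = k)
    (hka : ‖k‖ < 1) :
    (inner ℂ (la k • w + lb k • x) (la k • w + lb k • x) : ℂ) = 1 := by
  have hxw : (inner ℂ x w : ℂ) = (starRingEnd ℂ) k := by rw [← inner_conj_symm, hk]
  rw [inner_comb, inner_self_one hw, inner_self_one hx, hk, hxw,
    conj_la, conj_lb]
  linear_combination sG1 hka

lemma inv_uv (hw : ‖w‖ = 1) (hx : ‖x‖ = 1) {k : ℂ} (hk : (inner ℂ w x : ℂ) = k)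
    (hka : ‖k‖ < 1) :
    (inner ℂ (la k • w + lb k • x) (lc k • w + la k • x) : ℂ) = 0 := by
  have hxw : (inner ℂ x w : ℂ) = (starRingEnd ℂ) k := by rw [← inner_conj_symm, hk]
  rw [inner_comb, inner_self_one hw, inner_self_one hx, hk, hxw,
    conj_la, conj_lb]
  linear_combination sG2 hka

lemma inv_vv (hw : ‖w‖ = 1) (hx : ‖x‖ = 1) {k : ℂ} (hk : (inner ℂ w x : ℂ) = k)
    (hka : ‖k‖ < 1) :
    (inner ℂ (lc k • w + la k • x) (lc k • w + la k • x) : ℂ) = 1 := by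
  have hxw : (inner ℂ x w : ℂ) = (starRingEnd ℂ) k := by rw [← inner_conj_symm, hk]
  rw [inner_comb, inner_self_one hw, inner_self_one hx, hk, hxw,
    conj_la, conj_lc]
  linear_combination sG3 hka

end vec

/-! ### The forward and inverse maps -/

noncomputable def lowdinFwd (N : ℕ) (p : OrthFrames N × OpenDisc) : NormFrames N :=
  ⟨(lA p.2.1 • p.1.1.1 + lB p.2.1 • p.1.1.2,
    lC p.2.1 • p.1.1.1 + lA p.2.1 • p.1.1.2), by
    obtain ⟨⟨⟨u, v⟩, hu, hv, huv⟩, ⟨h, hh⟩⟩ := p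
    refine ⟨norm_one_of_inner (fwd_ww hu hv huv hh),
            norm_one_of_inner (fwd_xx hu hv huv hh), ?_⟩
    rw [fwd_wx hu hv huv hh]
    exact hh⟩

noncomputable def lowdinInv (N : ℕ) (q : NormFrames N) : OrthFrames N × OpenDisc :=
  (⟨(la (inner ℂ q.1.1 q.1.2 : ℂ) • q.1.1 + lb (inner ℂ q.1.1 q.1.2 : ℂ) • q.1.2,
     lc (inner ℂ q.1.1 q.1.2 : ℂ) • q.1.1 + la (inner ℂ q.1.1 q.1.2 : ℂ) • q.1.2), by
    obtain ⟨⟨w, x⟩, hw, hx, hwx⟩ := q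
    exact ⟨norm_one_of_inner (inv_uu hw hx rfl hwx),
           norm_one_of_inner (inv_vv hw hx rfl hwx),
           inv_uv hw hx rfl hwx⟩⟩,
   ⟨(inner ℂ q.1.1 q.1.2 : ℂ), q.2.2.2⟩)

lemma lowdin_left_inv (N : ℕ) (p : OrthFrames N × OpenDisc) :
    lowdinInv N (lowdinFwd N p) = p := by
  obtain ⟨⟨⟨u, v⟩, hu, hv, huv⟩, ⟨h, hh⟩⟩ := p
  have hk : (inner ℂ (lA h • u + lB h • v) (lC h • u + lA h • v) : ℂ) = h :=
    fwd_wx hu hv huv hh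
  simp only [lowdinFwd, lowdinInv]
  refine Prod.ext (Subtype.ext ?_) (Subtype.ext ?_)
  · show (la _ • _ + lb _ • _, lc _ • _ + la _ • _) = (u, v)
    rw [hk]
    refine Prod.ext ?_ ?_
    · show la h • (lA h • u + lB h • v) + lb h • (lC h • u + lA h • v) = u
      have e : la h • (lA h • u + lB h • v) + lb h • (lC h • u + lA h • v)
          = (la h * lA h + lb h * lC h) • u + (la h * lB h + lb h * lA h) • v := by
        module
      rw [e, sI1 hh, sI2 hh, one_smul, zero_smul, add_zero]
    · show lc h • (lA h • u + lB h • v) + la h • (lC h • u + lA h • v) = v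
      have e : lc h • (lA h • u + lB h • v) + la h • (lC h • u + lA h • v)
          = (lc h * lA h + la h * lC h) • u + (lc h * lB h + la h * lA h) • v := by
        module
      rw [e, sI3 hh, sI4 hh, one_smul, zero_smul, zero_add]
  · exact hk

lemma lowdin_right_inv (N : ℕ) (q : NormFrames N) :
    lowdinFwd N (lowdinInv N q) = q := by
  obtain ⟨⟨w, x⟩, hw, hx, hwx⟩ := q
  set k : ℂ := (inner ℂ w x : ℂ) with hkdef
  apply Subtype.ext
  refine Prod.ext ?_ ?_
  · show lA k • (la k • w + lb k • x) + lB k • (lc k • w + la k • x) = w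
    have e : lA k • (la k • w + lb k • x) + lB k • (lc k • w + la k • x)
        = (lA k * la k + lB k * lc k) • w + (lA k * lb k + lB k * la k) • x := by
      module
    rw [e, sS1 hwx, sS2 hwx, one_smul, zero_smul, add_zero]
  · show lC k • (la k • w + lb k • x) + lA k • (lc k • w + la k • x) = x
    have e : lC k • (la k • w + lb k • x) + lA k • (lc k • w + la k • x)
        = (lC k * la k + lA k * lc k) • w + (lC k * lb k + lA k * la k) • x := by
      module
    rw [e, sS3 hwx, sS4 hwx, one_smul, zero_smul, zero_add]

/-! ### Continuity -/

lemma continuous_lowdinR : Continuous lowdinR :=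
  (Real.continuous_sqrt.comp (continuous_const.add continuous_norm)).add
    (Real.continuous_sqrt.comp (continuous_const.sub continuous_norm))

lemma continuous_lowdinS : Continuous lowdinS :=
  Real.continuous_sqrt.comp (continuous_const.sub (continuous_norm.pow 2))

lemma continuous_lA : Continuous lA :=
  Complex.continuous_ofReal.comp (continuous_lowdinR.div_const 2)

lemma continuous_lB : Continuous lB :=
  Complex.continuous_conj.div
    (Complex.continuous_ofReal.comp continuous_lowdinR) (fun h => cR_ne h)

lemma continuous_lC : Continuous lC :=
  continuous_id.div
    (Complex.continuous_ofReal.comp continuous_lowdinR) (fun h => cR_ne h)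

lemma lowdinFwd_continuous (N : ℕ) : Continuous (lowdinFwd N) := by
  apply Continuous.subtype_mk
  have ch : Continuous fun p : OrthFrames N × OpenDisc => (p.2 : ℂ) :=
    continuous_snd.subtype_val
  have c1 : Continuous fun p : OrthFrames N × OpenDisc => p.1.1.1 :=
    continuous_fst.subtype_val.fst
  have c2 : Continuous fun p : OrthFrames N × OpenDisc => p.1.1.2 :=
    continuous_fst.subtype_val.snd
  exact (((continuous_lA.comp ch).smul c1).add ((continuous_lB.comp ch).smul c2)).prodMk
    (((continuous_lC.comp ch).smul c1).add ((continuous_lA.comp ch).smul c2))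

lemma lowdinInv_continuous (N : ℕ) : Continuous (lowdinInv N) := by
  have c1 : Continuous fun q : NormFrames N => q.1.1 :=
    continuous_subtype_val.fst
  have c2 : Continuous fun q : NormFrames N => q.1.2 :=
    continuous_subtype_val.snd
  have ck : Continuous fun q : NormFrames N => (inner ℂ q.1.1 q.1.2 : ℂ) :=
    c1.inner c2
  have cS0 : ∀ q : NormFrames N,
      ((lowdinS (inner ℂ q.1.1 q.1.2 : ℂ) : ℝ) : ℂ) ≠ 0 :=
    fun q => cS_ne q.2.2.2
  have cRc : Continuous fun q : NormFrames N =>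
      ((lowdinR (inner ℂ q.1.1 q.1.2 : ℂ) : ℝ) : ℂ) :=
    Complex.continuous_ofReal.comp (continuous_lowdinR.comp ck)
  have cSc : Continuous fun q : NormFrames N =>
      ((lowdinS (inner ℂ q.1.1 q.1.2 : ℂ) : ℝ) : ℂ) :=
    Complex.continuous_ofReal.comp (continuous_lowdinS.comp ck)
  have cla : Continuous fun q : NormFrames N =>
      la (inner ℂ q.1.1 q.1.2 : ℂ) := by
    unfold la
    exact cRc.div (continuous_const.mul cSc)
      (fun q => by simpa using cS0 q)
  have clb : Continuous fun q : NormFrames N =>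
      lb (inner ℂ q.1.1 q.1.2 : ℂ) := by
    unfold lb
    exact (Complex.continuous_conj.comp ck).neg.div (cRc.mul cSc)
      (fun q => mul_ne_zero (cR_ne _) (cS0 q))
  have clc : Continuous fun q : NormFrames N =>
      lc (inner ℂ q.1.1 q.1.2 : ℂ) := by
    unfold lc
    exact ck.neg.div (cRc.mul cSc)
      (fun q => mul_ne_zero (cR_ne _) (cS0 q))
  refine Continuous.prodMk (Continuous.subtype_mk ?_ _) (Continuous.subtype_mk ck _)
  exact ((cla.smul c1).add (clb.smul c2)).prodMk ((clc.smul c1).add (cla.smul c2))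

/-- The homeomorphism. -/
noncomputable def lowdinHomeo (N : ℕ) : (OrthFrames N × OpenDisc) ≃ₜ NormFrames N where
  toFun := lowdinFwd N
  invFun := lowdinInv N
  left_inv := lowdin_left_inv N
  right_inv := lowdin_right_inv N
  continuous_toFun := lowdinFwd_continuous N
  continuous_invFun := lowdinInv_continuous N

/-- **Löwdin orthogonalisation as a homeomorphism `V × D° ≅ W`.**
The map `f((u,v), h) = ((R/2)·u + (conj h/R)·v, (h/R)·u + (R/2)·v)`, whose components
are the columns of `(u v)·M_h`, is a homeomorphism `V × D° → W`; its inverse sends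
`(w,x)` to the pair consisting of the columns of `(w x)·M_k⁻¹` together with
`k = ⟨w,x⟩`, and moreover `⟨f((u,v),h)₁, f((u,v),h)₂⟩ = h`. -/
theorem lowdin_homeomorphism (N : ℕ) (hN : 2 ≤ N) :
    ∃ f : (OrthFrames N × OpenDisc) ≃ₜ NormFrames N,
      (∀ (u v : EuclideanSpace ℂ (Fin N)) (hu : ‖u‖ = 1) (hv : ‖v‖ = 1)
          (huv : (inner ℂ u v : ℂ) = 0) (h : ℂ) (hh : ‖h‖ < 1),
        (f (⟨(u, v), hu, hv, huv⟩, ⟨h, hh⟩)).1 =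
          (((lowdinR h / 2 : ℝ) : ℂ) • u + ((starRingEnd ℂ) h / (lowdinR h : ℂ)) • v,
           (h / (lowdinR h : ℂ)) • u + ((lowdinR h / 2 : ℝ) : ℂ) • v)) ∧
      (∀ (u v : EuclideanSpace ℂ (Fin N)) (hu : ‖u‖ = 1) (hv : ‖v‖ = 1)
          (huv : (inner ℂ u v : ℂ) = 0) (h : ℂ) (hh : ‖h‖ < 1),
        (inner ℂ (f (⟨(u, v), hu, hv, huv⟩, ⟨h, hh⟩)).1.1
            (f (⟨(u, v), hu, hv, huv⟩, ⟨h, hh⟩)).1.2 : ℂ) = h) ∧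
      (∀ (w x : EuclideanSpace ℂ (Fin N)) (hw : ‖w‖ = 1) (hx : ‖x‖ = 1)
          (hwx : ‖(inner ℂ w x : ℂ)‖ < 1),
        (f.symm ⟨(w, x), hw, hx, hwx⟩).1.1 =
          ((lowdinM (inner ℂ w x : ℂ))⁻¹ 0 0 • w + (lowdinM (inner ℂ w x : ℂ))⁻¹ 1 0 • x,
           (lowdinM (inner ℂ w x : ℂ))⁻¹ 0 1 • w + (lowdinM (inner ℂ w x : ℂ))⁻¹ 1 1 • x) ∧
        ((f.symm ⟨(w, x), hw, hx, hwx⟩).2 : ℂ) = (inner ℂ w x : ℂ)) := by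
  refine ⟨lowdinHomeo N, ?_, ?_, ?_⟩
  · intro u v hu hv huv h hh
    rfl
  · intro u v hu hv huv h hh
    exact fwd_wx hu hv huv hh
  · intro w x hw hx hwx
    constructor
    · rw [lowdinM_inv hwx]
      show (la (inner ℂ w x : ℂ) • w + lb (inner ℂ w x : ℂ) • x,
            lc (inner ℂ w x : ℂ) • w + la (inner ℂ w x : ℂ) • x) = _
      simp [Matrix.cons_val_zero, Matrix.cons_val_one, Matrix.head_cons]
    · rfl
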